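/- arXiv:2405.19127 — 4 statements merged into one kernel-verified Lean document; each statement's English description precedes it below -/
import Mathlib

section
/- The map φ: M_g → Γ_+(M), m y^α ∂_ξ^j δ_g ↦ (−1)^{|α|+j} m ∂_t^α δ_f, satisfies the intertwining relations: (1) φ ∘ ∂_ξ^k = (−1)^k φ for all k ∈ Z; (2) φ ∘ y_i = −∂_{t_i} ∘ φ for all i; (3) φ ∘ ∂_{y_i} = t_i ∘ φ for all i; (4) φ ∘ θ_y = s ∘ φ, where θ_y = Σ y_i ∂_{y_i} on M_g and s = −Σ ∂_{t_i} t_i on Γ_+(M). -/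
/-!
On a basis vector `m y^α ∂_ξ^j δ_g` the map `φ` only remembers `α` and the parity of `|α| + j`.
Both `y_i` and `∂_ξ` raise `|α| + j` by one, so `φ` turns them into `-∂_{t_i}` and `-1`. Both
terms of `∂_{y_i}` (lowering `α_i`, raising `j`) flip the parity as well, which accounts for their
signs being opposite to those of the two terms of `t_i`. Relation (1) follows from
`φ ∘ ∂_ξ = -φ` because `∂_ξ` is invertible, and (4) from (2) and (3).
-/

open Finsupp

theorem neg_one_zpow_add_one {R : Type*} [DivisionRing R] (n : ℤ) :
    (-1 : R) ^ (n + 1) = -(-1) ^ n := by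
  rw [zpow_add_one₀ (neg_ne_zero.2 one_ne_zero), mul_neg_one]

section Degree

variable {σ : Type*} [Fintype σ] {R : Type*} [DivisionRing R]

theorem Finsupp.sum_intCast_add_single (α : σ →₀ ℕ) (i : σ) :
    ∑ k, ((α + single i 1 : σ →₀ ℕ) k : ℤ) = ∑ k, (α k : ℤ) + 1 := by
  simp only [← Nat.cast_sum, ← degree_eq_sum, map_add, degree_single, Nat.cast_add, Nat.cast_one]

theorem Finsupp.neg_one_zpow_sum_add_single (α : σ →₀ ℕ) (i : σ) (j : ℤ) :
    (-1 : R) ^ (∑ k, ((α + single i 1 : σ →₀ ℕ) k : ℤ) + j) = -(-1) ^ (∑ k, (α k : ℤ) + j) := by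
  rw [sum_intCast_add_single, add_right_comm, neg_one_zpow_add_one]

/-- For `α i = 0` the truncated difference `α - single i 1` is `α` again, but then the factor
`α i` kills both sides. -/
theorem Finsupp.natCast_mul_neg_one_zpow_sum_tsub_single (α : σ →₀ ℕ) (i : σ) (j : ℤ) :
    (α i : R) * (-1) ^ (∑ k, ((α - single i 1 : σ →₀ ℕ) k : ℤ) + j) =
      -((α i : R) * (-1) ^ (∑ k, (α k : ℤ) + j)) := by
  rcases Nat.eq_zero_or_pos (α i) with hα | hα
  · simp [hα]
  have h := neg_one_zpow_sum_add_single (R := R) (α - single i 1) i j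
  rw [tsub_add_cancel_of_le (single_le_iff.2 hα)] at h
  rw [h, mul_neg, neg_neg]

end Degree

namespace LinearMap

variable {K V W : Type*} [Field K] [AddCommGroup V] [Module K V] [AddCommGroup W] [Module K W]

theorem comp_zpow_eq_zpow_smul (φ : V →ₗ[K] W) (e : V ≃ₗ[K] V) {c : K} (hc : c ≠ 0)
    (h : φ ∘ₗ e.toLinearMap = c • φ) (k : ℤ) :
    φ ∘ₗ (e ^ k).toLinearMap = c ^ k • φ := by
  have h_inv : φ ∘ₗ (↑e⁻¹ : V →ₗ[K] V) = c⁻¹ • φ := by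
    rw [eq_inv_smul_iff₀ hc, ← smul_comp, ← h, comp_assoc, ← Module.End.mul_eq_comp,
      ← LinearEquiv.coe_toLinearMap_mul, mul_inv_cancel, LinearEquiv.coe_toLinearMap_one, comp_id]
  induction k using Int.induction_on with
  | zero => simp
  | succ n ih =>
    rw [zpow_add_one, LinearEquiv.coe_toLinearMap_mul, Module.End.mul_eq_comp, ← comp_assoc, ih,
      smul_comp, h, smul_smul, zpow_add_one₀ hc]
  | pred n ih =>
    rw [zpow_sub_one, LinearEquiv.coe_toLinearMap_mul, Module.End.mul_eq_comp, ← comp_assoc, ih,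
      smul_comp, h_inv, smul_smul, zpow_sub_one₀ hc]

end LinearMap

theorem LinearMap.comp_sum_mul {R V W : Type*} [CommSemiring R] [AddCommMonoid V] [Module R V]
    [AddCommMonoid W] [Module R W] {ι : Type*} (s : Finset ι) (φ : V →ₗ[R] W)
    {A C : ι → Module.End R V} {A' C' : ι → Module.End R W}
    (hA : ∀ i, φ ∘ₗ A i = A' i ∘ₗ φ) (hC : ∀ i, φ ∘ₗ C i = C' i ∘ₗ φ) :
    φ ∘ₗ (∑ i ∈ s, A i * C i) = (∑ i ∈ s, A' i * C' i) ∘ₗ φ := by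
  have h_mul : ∀ i, φ ∘ₗ (A i * C i) = (A' i * C' i) ∘ₗ φ := fun i => by
    rw [Module.End.mul_eq_comp, ← comp_assoc, hA, comp_assoc, hC, ← comp_assoc,
      Module.End.mul_eq_comp]
  ext x
  simp only [comp_apply, sum_apply, map_sum]
  exact Finset.sum_congr rfl fun i _ => LinearMap.congr_fun (h_mul i) x

/-- The map `φ : M_g → Γ_+(M)`, `m y^α ∂_ξ^j δ_g ↦ (−1)^{|α|+j} m ∂_t^α δ_f`,
satisfies: (1) `φ ∘ ∂_ξ^k = (−1)^k φ` for all `k ∈ ℤ`; (2) `φ ∘ y_i = −∂_{t_i} ∘ φ`;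
(3) `φ ∘ ∂_{y_i} = t_i ∘ φ`; (4) `φ ∘ θ_y = s ∘ φ` with `θ_y = Σ y_i ∂_{y_i}` on `M_g`
and `s = −Σ ∂_{t_i} t_i` on `Γ_+(M)`.  Here `M_g = ((Fin r →₀ ℕ) × ℤ) →₀ M`,
`Γ_+(M) = (Fin r →₀ ℕ) →₀ M`, `f i` is multiplication by `f_i`, and `∂_ξ` is the
invertible operator `Dξ` (a linear automorphism). -/
theorem stmt7 (r : ℕ) (M : Type*) [AddCommGroup M] [Module ℂ M]
    (f : Fin r → Module.End ℂ M)
    (Y DY : Fin r → Module.End ℂ (((Fin r →₀ ℕ) × ℤ) →₀ M))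
    (Dξ : (((Fin r →₀ ℕ) × ℤ) →₀ M) ≃ₗ[ℂ] (((Fin r →₀ ℕ) × ℤ) →₀ M))
    (T DT : Fin r → Module.End ℂ ((Fin r →₀ ℕ) →₀ M))
    (hY : ∀ (i : Fin r) (α : Fin r →₀ ℕ) (j : ℤ) (m : M),
      Y i (Finsupp.single (α, j) m) = Finsupp.single (α + Finsupp.single i 1, j) m)
    (hDY : ∀ (i : Fin r) (α : Fin r →₀ ℕ) (j : ℤ) (m : M),
      DY i (Finsupp.single (α, j) m) =
        (α i : ℂ) • Finsupp.single (α - Finsupp.single i 1, j) m -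
          Finsupp.single (α, j + 1) (f i m))
    (hDξ : ∀ (α : Fin r →₀ ℕ) (j : ℤ) (m : M),
      Dξ (Finsupp.single (α, j) m) = Finsupp.single (α, j + 1) m)
    (hT : ∀ (i : Fin r) (α : Fin r →₀ ℕ) (m : M),
      T i (Finsupp.single α m) =
        Finsupp.single α (f i m) - (α i : ℂ) • Finsupp.single (α - Finsupp.single i 1) m)
    (hDT : ∀ (i : Fin r) (α : Fin r →₀ ℕ) (m : M),
      DT i (Finsupp.single α m) = Finsupp.single (α + Finsupp.single i 1) m)
    (φ : (((Fin r →₀ ℕ) × ℤ) →₀ M) →ₗ[ℂ] ((Fin r →₀ ℕ) →₀ M))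
    (hφ : ∀ (α : Fin r →₀ ℕ) (j : ℤ) (m : M),
      φ (Finsupp.single (α, j) m) =
        ((-1 : ℂ) ^ ((∑ i, (α i : ℤ)) + j)) • Finsupp.single α m) :
    (∀ k : ℤ, φ ∘ₗ (Dξ ^ k).toLinearMap = ((-1 : ℂ) ^ k) • φ) ∧
    (∀ i, φ ∘ₗ (Y i : (((Fin r →₀ ℕ) × ℤ) →₀ M) →ₗ[ℂ] (((Fin r →₀ ℕ) × ℤ) →₀ M)) =
      -((DT i : ((Fin r →₀ ℕ) →₀ M) →ₗ[ℂ] ((Fin r →₀ ℕ) →₀ M)) ∘ₗ φ)) ∧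
    (∀ i, φ ∘ₗ (DY i : (((Fin r →₀ ℕ) × ℤ) →₀ M) →ₗ[ℂ] (((Fin r →₀ ℕ) × ℤ) →₀ M)) =
      (T i : ((Fin r →₀ ℕ) →₀ M) →ₗ[ℂ] ((Fin r →₀ ℕ) →₀ M)) ∘ₗ φ) ∧
    (φ ∘ₗ ((∑ i, Y i * DY i : Module.End ℂ (((Fin r →₀ ℕ) × ℤ) →₀ M)) :
        (((Fin r →₀ ℕ) × ℤ) →₀ M) →ₗ[ℂ] (((Fin r →₀ ℕ) × ℤ) →₀ M)) =
      ((-(∑ i, DT i * T i) : Module.End ℂ ((Fin r →₀ ℕ) →₀ M)) :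
        ((Fin r →₀ ℕ) →₀ M) →ₗ[ℂ] ((Fin r →₀ ℕ) →₀ M)) ∘ₗ φ) := by
  have hφDξ : φ ∘ₗ Dξ.toLinearMap = (-1 : ℂ) • φ := by
    refine Finsupp.lhom_ext fun ⟨α, j⟩ m => ?_
    simp only [LinearMap.comp_apply, LinearEquiv.coe_coe, LinearMap.smul_apply, hDξ, hφ,
      ← add_assoc, neg_one_zpow_add_one, neg_smul, one_smul]
  have hφY : ∀ i, φ ∘ₗ Y i = (-DT i) ∘ₗ φ := fun i => by
    refine Finsupp.lhom_ext fun ⟨α, j⟩ m => ?_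
    simp only [LinearMap.comp_apply, LinearMap.neg_apply, hY, hφ, map_smul, hDT,
      neg_one_zpow_sum_add_single, neg_smul, smul_neg]
  have hφDY : ∀ i, φ ∘ₗ DY i = T i ∘ₗ φ := fun i => by
    refine Finsupp.lhom_ext fun ⟨α, j⟩ m => ?_
    simp only [LinearMap.comp_apply, hDY, map_sub, map_smul, hφ, hT, smul_smul,
      natCast_mul_neg_one_zpow_sum_tsub_single, ← add_assoc, neg_one_zpow_add_one]
    module
  refine ⟨LinearMap.comp_zpow_eq_zpow_smul φ Dξ (neg_ne_zero.2 one_ne_zero) hφDξ, fun i => ?_,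
    hφDY, ?_⟩
  · rw [hφY, LinearMap.neg_comp]
  · rw [LinearMap.comp_sum_mul _ φ hφY hφDY]
    simp only [← Finset.sum_neg_distrib]
    exact congrArg (· ∘ₗ φ) (Finset.sum_congr rfl fun i _ => neg_mul (DT i) (T i))
end

section
/- For each ℓ ∈ Z, the restriction of φ to the eigenspace E^{(ℓ)} = ⊕_{|α|=j+ℓ} M y^α ∂_ξ^j δ_g ⊆ M_g is a bijection onto Γ_+(M), and it intertwines the operators s on both sides up to shift: φ ∘ s = (s − ℓ) ∘ φ on E^{(ℓ)}, where on M_g, s = −∂_ξ ξ, and on Γ_+(M), s = −Σ_{i=1}^r ∂_{t_i} t_i. -/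
/-!
On `E^{(ℓ)}` the index `j = |α| - ℓ` is determined by `α`, so `φ` maps the summand indexed by
`(α, |α| - ℓ)` onto the summand indexed by `α`, up to the unit `±1`; hence it is bijective.
For the intertwining it suffices to look at generators: `-∂_ξ ξ` and `-Σ ∂_{t_i} t_i` both shift
`m` to `-Σ f_i m` at `α + e_i` (with the same sign under `φ`, as `|α|` and `j` both grow by one)
and add a diagonal term, `j` resp. `|α| = j + ℓ`.
-/

open Finsupp Function Set

section Supported

variable {R M N ι κ : Type*} [CommSemiring R] [AddCommMonoid M] [Module R M]
  [AddCommMonoid N] [Module R N]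

theorem Finsupp.eqOn_supported_of_single {s : Set ι} {A B : (ι →₀ M) →ₗ[R] N}
    (h : ∀ i ∈ s, ∀ m, A (single i m) = B (single i m)) {u : ι →₀ M}
    (hu : u ∈ supported M R s) : A u = B u := by
  rw [← u.sum_single, map_finsuppSum, map_finsuppSum]
  exact Finset.sum_congr rfl fun i hi => h i (hu hi) _

theorem Finsupp.bijective_comp_supported_subtype {s : Set ι} {g : ι → κ}
    (hg : BijOn g s univ) {c : ι → R} (hc : ∀ i ∈ s, IsUnit (c i))
    {φ : (ι →₀ M) →ₗ[R] (κ →₀ M)} (hφ : ∀ i ∈ s, ∀ m, φ (single i m) = c i • single (g i) m) :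
    Bijective (φ ∘ₗ (supported M R s).subtype) := by
  set e := hg.equiv g
  set h : κ → ι := fun k => e.symm ⟨k, mem_univ k⟩
  have hs k : h k ∈ s := (e.symm _).2
  have hgh k : g (h k) = k := congrArg Subtype.val (e.apply_symm_apply ⟨k, mem_univ k⟩)
  have hhg i (hi : i ∈ s) : h (g i) = i := congrArg Subtype.val (e.symm_apply_apply ⟨i, hi⟩)
  let ψ : (κ →₀ M) →ₗ[R] (ι →₀ M) := lsum R fun k => Ring.inverse (c (h k)) • lsingle (h k)
  have hψ k m : ψ (single k m) = Ring.inverse (c (h k)) • single (h k) m := by simp [ψ]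
  have hψ_mem y : ψ y ∈ supported M R s := by
    induction y using Finsupp.induction_linear with
    | zero => simp
    | add x y hx hy => simpa using add_mem hx hy
    | single k m => rw [hψ]; exact Submodule.smul_mem _ _ (single_mem_supported R m (hs k))
  have hψφ : ∀ u ∈ supported M R s, ψ (φ u) = u :=
    fun u => eqOn_supported_of_single (A := ψ ∘ₗ φ) (B := LinearMap.id) fun i hi m => by
      simp [hφ i hi, hψ, hhg i hi, smul_smul, Ring.inverse_mul_cancel _ (hc i hi)]
  have hφψ : φ ∘ₗ ψ = LinearMap.id := lhom_ext fun k m => by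
    simp [hψ, hφ _ (hs k), hgh, smul_smul, Ring.mul_inverse_cancel _ (hc _ (hs k))]
  refine ⟨fun u v huv => Subtype.ext ?_, fun y => ⟨⟨ψ y, hψ_mem y⟩, LinearMap.congr_fun hφψ y⟩⟩
  rw [← hψφ u u.2, ← hψφ v v.2]
  exact congrArg ψ huv

end Supported

theorem Set.bijOn_fst_setOf_eq_add {α G : Type*} [AddGroup G] (F : α → G) (ℓ : G) :
    BijOn Prod.fst {p : α × G | F p.1 = p.2 + ℓ} univ := by
  refine ⟨fun _ _ => mem_univ _, fun p (hp : F p.1 = p.2 + ℓ) q (hq : F q.1 = q.2 + ℓ) hpq =>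
    Prod.ext hpq ?_, fun a _ => ⟨(a, F a - ℓ), by simp, rfl⟩⟩
  rw [← add_left_inj ℓ, ← hp, ← hq, hpq]

section

variable {r : ℕ} {M : Type*} [AddCommGroup M] [Module ℂ M]

theorem sum_natCast_add_single (α : Fin r →₀ ℕ) (i : Fin r) :
    ∑ k, ((α + single i (1 : ℕ)) k : ℤ) = ∑ k, (α k : ℤ) + 1 := by
  simp [Finset.sum_add_distrib, single_apply]

-- Truncated subtraction: for `α i = 0` the index is not `α`, but the coefficient vanishes.
theorem smul_single_tsub_add_single (α : Fin r →₀ ℕ) (i : Fin r) (m : M) :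
    (α i : ℂ) • single (α - single i 1 + single i 1) m = (α i : ℂ) • single α m := by
  rcases Nat.eq_zero_or_pos (α i) with h | h
  · simp [h]
  · rw [tsub_add_cancel_of_le (single_le_iff.mpr h)]

theorem sum_DT_mul_T_single {f : Fin r → Module.End ℂ M}
    {T DT : Fin r → Module.End ℂ ((Fin r →₀ ℕ) →₀ M)}
    (hT : ∀ i α m, T i (single α m) =
      single α (f i m) - (α i : ℂ) • single (α - single i 1) m)
    (hDT : ∀ i α (m : M), DT i (single α m) = single (α + single i 1) m)
    (α : Fin r →₀ ℕ) (m : M) :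
    (∑ i, DT i * T i) (single α m) =
      ∑ i, single (α + single i 1) (f i m) - ((∑ i, (α i : ℤ) : ℤ) : ℂ) • single α m := by
  have h i : (DT i * T i) (single α m) =
      single (α + single i 1) (f i m) - (α i : ℂ) • single α m := by
    rw [Module.End.mul_apply, hT, map_sub, map_smul, hDT, hDT, smul_single_tsub_add_single]
  rw [LinearMap.sum_apply, Finset.sum_congr rfl fun i _ => h i, Finset.sum_sub_distrib,
    ← Finset.sum_smul]
  push_cast
  rfl

theorem Dξ_mul_Ξ_single {f : Fin r → Module.End ℂ M}
    {Dξ Ξ : Module.End ℂ (((Fin r →₀ ℕ) × ℤ) →₀ M)}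
    (hDξ : ∀ α j (m : M), Dξ (single (α, j) m) = single (α, j + 1) m)
    (hΞ : ∀ α j m, Ξ (single (α, j) m) =
      (∑ i, single (α + single i 1, j) (f i m)) - (j : ℂ) • single (α, j - 1) m)
    (α : Fin r →₀ ℕ) (j : ℤ) (m : M) :
    (Dξ * Ξ) (single (α, j) m) =
      ∑ i, single (α + single i 1, j + 1) (f i m) - (j : ℂ) • single (α, j) m := by
  simp only [Module.End.mul_apply, hΞ, map_sub, map_sum, map_smul, hDξ, sub_add_cancel]

theorem map_neg_Dξ_mul_Ξ_single {f : Fin r → Module.End ℂ M}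
    {Dξ Ξ : Module.End ℂ (((Fin r →₀ ℕ) × ℤ) →₀ M)}
    {T DT : Fin r → Module.End ℂ ((Fin r →₀ ℕ) →₀ M)}
    (hDξ : ∀ α j (m : M), Dξ (single (α, j) m) = single (α, j + 1) m)
    (hΞ : ∀ α j m, Ξ (single (α, j) m) =
      (∑ i, single (α + single i 1, j) (f i m)) - (j : ℂ) • single (α, j - 1) m)
    (hT : ∀ i α m, T i (single α m) =
      single α (f i m) - (α i : ℂ) • single (α - single i 1) m)
    (hDT : ∀ i α (m : M), DT i (single α m) = single (α + single i 1) m)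
    {φ : (((Fin r →₀ ℕ) × ℤ) →₀ M) →ₗ[ℂ] ((Fin r →₀ ℕ) →₀ M)}
    (hφ : ∀ α j m, φ (single (α, j) m) = ((-1 : ℂ) ^ ((∑ i, (α i : ℤ)) + j)) • single α m)
    {ℓ : ℤ} {α : Fin r →₀ ℕ} {j : ℤ} (hαj : ∑ i, (α i : ℤ) = j + ℓ) (m : M) :
    φ (-(Dξ * Ξ) (single (α, j) m)) =
      -(∑ i, DT i * T i) (φ (single (α, j) m)) - (ℓ : ℂ) • φ (single (α, j) m) := by
  have hsign : (-1 : ℂ) ^ (∑ i, (α i : ℤ) + 1 + (j + 1)) = (-1) ^ (∑ i, (α i : ℤ) + j) := by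
    rw [show ∑ i, (α i : ℤ) + 1 + (j + 1) = ∑ i, (α i : ℤ) + j + 2 by ring,
      zpow_add₀ (by norm_num), zpow_two, neg_one_mul, neg_neg, mul_one]
  simp only [Dξ_mul_Ξ_single hDξ hΞ, hφ, map_neg, map_sub, map_sum, map_smul,
    sum_DT_mul_T_single hT hDT, sum_natCast_add_single, hsign, ← Finset.smul_sum]
  rw [hαj]
  push_cast
  module

end

/-- For each `ℓ ∈ ℤ`, the restriction of
`φ : M_g → Γ_+(M)`, `m y^α ∂_ξ^j δ_g ↦ (−1)^{|α|+j} m ∂_t^α δ_f`, to the eigenspace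
`E^{(ℓ)} = ⊕_{|α| = j+ℓ} M y^α ∂_ξ^j δ_g` is a bijection onto `Γ_+(M)`, and it
intertwines `s` up to shift: `φ ∘ s = (s − ℓ) ∘ φ` on `E^{(ℓ)}`, where `s = −∂_ξ ξ` on
`M_g` and `s = −Σ ∂_{t_i} t_i` on `Γ_+(M)`. -/
theorem stmt8 (r : ℕ) (M : Type*) [AddCommGroup M] [Module ℂ M]
    (f : Fin r → Module.End ℂ M)
    (Dξ Ξ : Module.End ℂ (((Fin r →₀ ℕ) × ℤ) →₀ M))
    (T DT : Fin r → Module.End ℂ ((Fin r →₀ ℕ) →₀ M))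
    (hDξ : ∀ (α : Fin r →₀ ℕ) (j : ℤ) (m : M),
      Dξ (Finsupp.single (α, j) m) = Finsupp.single (α, j + 1) m)
    (hΞ : ∀ (α : Fin r →₀ ℕ) (j : ℤ) (m : M),
      Ξ (Finsupp.single (α, j) m) =
        (∑ i : Fin r, Finsupp.single (α + Finsupp.single i 1, j) (f i m)) -
          (j : ℂ) • Finsupp.single (α, j - 1) m)
    (hT : ∀ (i : Fin r) (α : Fin r →₀ ℕ) (m : M),
      T i (Finsupp.single α m) =
        Finsupp.single α (f i m) - (α i : ℂ) • Finsupp.single (α - Finsupp.single i 1) m)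
    (hDT : ∀ (i : Fin r) (α : Fin r →₀ ℕ) (m : M),
      DT i (Finsupp.single α m) = Finsupp.single (α + Finsupp.single i 1) m)
    (φ : (((Fin r →₀ ℕ) × ℤ) →₀ M) →ₗ[ℂ] ((Fin r →₀ ℕ) →₀ M))
    (hφ : ∀ (α : Fin r →₀ ℕ) (j : ℤ) (m : M),
      φ (Finsupp.single (α, j) m) =
        ((-1 : ℂ) ^ ((∑ i, (α i : ℤ)) + j)) • Finsupp.single α m)
    (E : ℤ → Submodule ℂ (((Fin r →₀ ℕ) × ℤ) →₀ M))
    (hE : ∀ ℓ : ℤ, E ℓ = Finsupp.supported M ℂ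
      {p : (Fin r →₀ ℕ) × ℤ | (∑ i, (p.1 i : ℤ)) = p.2 + ℓ})
    (sMg : Module.End ℂ (((Fin r →₀ ℕ) × ℤ) →₀ M)) (hsMg : sMg = -(Dξ * Ξ))
    (sΓ : Module.End ℂ ((Fin r →₀ ℕ) →₀ M)) (hsΓ : sΓ = -(∑ i, DT i * T i)) :
    ∀ ℓ : ℤ,
      Function.Bijective ⇑(φ ∘ₗ (E ℓ).subtype) ∧
      ∀ u ∈ E ℓ, φ (sMg u) = sΓ (φ u) - (ℓ : ℂ) • φ u := by
  obtain rfl := funext hE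
  subst hsMg hsΓ
  intro ℓ
  have hfst := bijOn_fst_setOf_eq_add (fun α : Fin r →₀ ℕ => ∑ i, (α i : ℤ)) ℓ
  have hsign (p : (Fin r →₀ ℕ) × ℤ) : IsUnit ((-1 : ℂ) ^ (∑ i, (p.1 i : ℤ) + p.2)) :=
    isUnit_iff_ne_zero.mpr (zpow_ne_zero _ (by norm_num))
  refine ⟨bijective_comp_supported_subtype hfst (fun p _ => hsign p) (fun p _ m => hφ p.1 p.2 m),
    fun u hu => ?_⟩
  exact eqOn_supported_of_single (A := φ ∘ₗ (-(Dξ * Ξ)))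
    (B := -(∑ i, DT i * T i) ∘ₗ φ - (ℓ : ℂ) • φ)
    (fun p hp m => map_neg_Dξ_mul_Ξ_single hDξ hΞ hT hDT hφ hp m) hu
end

section
/- With W_• a finite increasing filtration of M by D_X-submodules, define W_k Γ_+(M) = ⊕_α (W_k M) ∂_t^α δ_f and W_k M_g = ⊕_{α,j} (W_{k+r} M) y^α ∂_ξ^j δ_g, with W_k E^{(ℓ)} the induced filtration on the eigenspace E^{(ℓ)}. Then φ(W_k E^{(ℓ)}) = W_{k+r} Γ_+(M) for all k, ℓ. -/
/-- For a finite increasing filtration `W_•` of `M` by `D_X`-submodules, with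
`W_k Γ_+(M) = ⊕_α (W_k M) ∂_t^α δ_f` and `W_k M_g = ⊕_{α,j} (W_{k+r} M) y^α ∂_ξ^j δ_g`
(so `W_k E^{(ℓ)}` is the induced filtration on the eigenspace `E^{(ℓ)}`), the map
`φ(m y^α ∂_ξ^j δ_g) = (−1)^{|α|+j} m ∂_t^α δ_f` satisfies
`φ(W_k E^{(ℓ)}) = W_{k+r} Γ_+(M)` for all `k, ℓ`.
(`W` being a filtration by `D_X`-submodules is expressed by stability under the
commuting operators `DXops` generating the `D_X`-action on `M`.) -/
theorem stmt10 (r : ℕ) (M : Type*) [AddCommGroup M] [Module ℂ M]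
    (W : ℤ → Submodule ℂ M) (hWmono : Monotone W)
    (hWfin : ∃ a b : ℤ, W a = ⊥ ∧ W b = ⊤)
    (DXops : Set (Module.End ℂ M))
    (hWD : ∀ k : ℤ, ∀ P ∈ DXops, (W k).map P ≤ W k)
    (φ : (((Fin r →₀ ℕ) × ℤ) →₀ M) →ₗ[ℂ] ((Fin r →₀ ℕ) →₀ M))
    (hφ : ∀ (α : Fin r →₀ ℕ) (j : ℤ) (m : M),
      φ (Finsupp.single (α, j) m) =
        ((-1 : ℂ) ^ ((∑ i, (α i : ℤ)) + j)) • Finsupp.single α m)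
    (WΓ : ℤ → Submodule ℂ ((Fin r →₀ ℕ) →₀ M))
    (hWΓ : ∀ (k : ℤ) (u : (Fin r →₀ ℕ) →₀ M),
      u ∈ WΓ k ↔ ∀ α : Fin r →₀ ℕ, u α ∈ W k)
    (WE : ℤ → ℤ → Submodule ℂ (((Fin r →₀ ℕ) × ℤ) →₀ M))
    (hWE : ∀ (k ℓ : ℤ) (u : ((Fin r →₀ ℕ) × ℤ) →₀ M),
      u ∈ WE k ℓ ↔
        (∀ q : (Fin r →₀ ℕ) × ℤ, (∑ i, (q.1 i : ℤ)) ≠ q.2 + ℓ → u q = 0) ∧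
        ∀ q : (Fin r →₀ ℕ) × ℤ, u q ∈ W (k + r)) :
    ∀ k ℓ : ℤ, Submodule.map φ (WE k ℓ) = WΓ (k + r) := by

  intro k ℓ
  apply le_antisymm
  · rintro _ ⟨u, hu, rfl⟩
    rw [hWΓ]
    obtain ⟨-, hu2⟩ := (hWE k ℓ u).mp hu
    intro α
    have hrep : φ u = u.sum fun q m =>
        ((-1 : ℂ) ^ ((∑ i, (q.1 i : ℤ)) + q.2)) • Finsupp.single q.1 m := by
      conv_lhs => rw [← u.sum_single]
      rw [map_finsuppSum]
      exact Finsupp.sum_congr fun q _ => hφ q.1 q.2 (u q)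
    rw [hrep, Finsupp.sum_apply, Finsupp.sum]
    apply Submodule.sum_mem
    intro q hq
    rw [Finsupp.smul_apply, Finsupp.single_apply]
    split_ifs with h
    · subst h; exact Submodule.smul_mem _ _ (hu2 q)
    · rw [smul_zero]; exact Submodule.zero_mem _
  · intro v hv
    rw [hWΓ] at hv
    set c : (Fin r →₀ ℕ) → ℂ :=
      fun α => (-1 : ℂ) ^ ((∑ i, (α i : ℤ)) + ((∑ i, (α i : ℤ)) - ℓ)) with hc
    refine ⟨v.sum fun α m =>
      Finsupp.single (α, (∑ i, (α i : ℤ)) - ℓ) (c α • m), ?_, ?_⟩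
    · rw [SetLike.mem_coe, hWE]
      constructor
      · intro q hq
        rw [Finsupp.sum_apply, Finsupp.sum]
        apply Finset.sum_eq_zero
        intro α hα
        rw [Finsupp.single_apply, if_neg]
        intro h
        apply hq
        rw [← h]
        simp
      · intro q
        rw [Finsupp.sum_apply, Finsupp.sum]
        apply Submodule.sum_mem
        intro α hα
        rw [Finsupp.single_apply]
        split_ifs with h
        · exact Submodule.smul_mem _ _ (hv α)
        · exact Submodule.zero_mem _
    · rw [map_finsuppSum]
      conv_rhs => rw [← v.sum_single]
      refine Finsupp.sum_congr fun α hα => ?_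
      have hsq : c α * c α = 1 := by
        rw [hc]
        rw [← zpow_add₀ (by norm_num : (-1 : ℂ) ≠ 0)]
        exact Even.neg_one_zpow ⟨(∑ i, (α i : ℤ)) + ((∑ i, (α i : ℤ)) - ℓ), rfl⟩
      rw [hφ, Finsupp.smul_single, smul_smul, hsq, one_smul]
end

section
/- Let M be a D-module on A^r_y on which every element is ∂_{y_1},…,∂_{y_r}-torsion (i.e., every element is killed by some power of each ∂_{y_i}). Then M is isomorphic to N ⊗_C C[y_1,…,y_r] as a module over the Weyl algebra, where N = ∩_i ker(∂_{y_i}); that is, M is a 'constant' module N ⊠ O_{A^r}. -/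
section Aux
variable {A : Type*} [Ring A]

private lemma auxMul : ∀ {n : ℕ} (f : Fin n → A) (i : Fin n) (a : A),
    (∀ j, j ≠ i → Commute a (f j)) →
    (List.ofFn (Function.update f i (a * f i))).prod = a * (List.ofFn f).prod := by
  intro n
  induction n with
  | zero => exact fun f i => i.elim0
  | succ n ih =>
    intro f i a hc
    induction i using Fin.cases with
    | zero =>
      rw [List.ofFn_succ, List.ofFn_succ, List.prod_cons, List.prod_cons,
        Function.update_self]
      have h : (fun j : Fin n => Function.update f 0 (a * f 0) j.succ)
          = fun j : Fin n => f j.succ := by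
        funext j; rw [Function.update_of_ne (Fin.succ_ne_zero j)]
      rw [h, mul_assoc]
    | succ i' =>
      rw [List.ofFn_succ, List.ofFn_succ, List.prod_cons, List.prod_cons]
      have h0 : Function.update f i'.succ (a * f i'.succ) 0 = f 0 :=
        Function.update_of_ne (Fin.succ_ne_zero i').symm _ _
      have ht : (fun j : Fin n => Function.update f i'.succ (a * f i'.succ) j.succ)
          = Function.update (fun j : Fin n => f j.succ) i' (a * (fun j : Fin n => f j.succ) i') := by
        funext j
        by_cases hj : j = i'
        · subst hj; simp
        · rw [Function.update_of_ne (fun h => hj (Fin.succ_injective _ h)),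
            Function.update_of_ne hj]
      rw [h0, ht, ih _ _ _ (fun j hj => hc j.succ (fun h => hj (Fin.succ_injective _ h))),
        ← mul_assoc, ← (hc 0 (Fin.succ_ne_zero i').symm).eq, mul_assoc]

private lemma auxComm : ∀ {n : ℕ} (f : Fin n → A) (i : Fin n) (d : A),
    (∀ j, j ≠ i → Commute d (f j)) →
    d * (List.ofFn f).prod - (List.ofFn f).prod * d
      = (List.ofFn (Function.update f i (d * f i - f i * d))).prod := by
  intro n
  induction n with
  | zero => exact fun f i => i.elim0
  | succ n ih =>
    intro f i d hc
    induction i using Fin.cases with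
    | zero =>
      rw [List.ofFn_succ, List.ofFn_succ, List.prod_cons, List.prod_cons,
        Function.update_self]
      have h : (fun j : Fin n => Function.update f 0 (d * f 0 - f 0 * d) j.succ)
          = fun j : Fin n => f j.succ := by
        funext j; rw [Function.update_of_ne (Fin.succ_ne_zero j)]
      rw [h]
      have hT : Commute d (List.ofFn fun j : Fin n => f j.succ).prod := by
        apply Commute.list_prod_right
        intro x hx
        obtain ⟨j, rfl⟩ := List.mem_ofFn.1 hx
        exact hc j.succ (Fin.succ_ne_zero j)
      rw [sub_mul, mul_assoc, ← hT.eq, ← mul_assoc, ← mul_assoc, ← sub_mul]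
    | succ i' =>
      rw [List.ofFn_succ, List.ofFn_succ, List.prod_cons, List.prod_cons]
      have h0 : Function.update f i'.succ (d * f i'.succ - f i'.succ * d) 0 = f 0 :=
        Function.update_of_ne (Fin.succ_ne_zero i').symm _ _
      have ht : (fun j : Fin n => Function.update f i'.succ (d * f i'.succ - f i'.succ * d) j.succ)
          = Function.update (fun j : Fin n => f j.succ) i'
              (d * (fun j : Fin n => f j.succ) i' - (fun j : Fin n => f j.succ) i' * d) := by
        funext j
        by_cases hj : j = i'
        · subst hj; simp
        · rw [Function.update_of_ne (fun h => hj (Fin.succ_injective _ h)),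
            Function.update_of_ne hj]
      rw [h0, ht, ← ih _ _ _ (fun j hj => hc j.succ (fun h => hj (Fin.succ_injective _ h)))]
      have hc0 := (hc 0 (Fin.succ_ne_zero i').symm).eq
      set T := (List.ofFn fun j : Fin n => f j.succ).prod
      rw [mul_sub]
      calc d * (f 0 * T) - f 0 * T * d = (d * f 0) * T - (f 0 * T) * d := by
            rw [mul_assoc d (f 0) T]
        _ = (f 0 * d) * T - f 0 * (T * d) := by rw [hc0, mul_assoc (f 0) T d]
        _ = f 0 * (d * T) - f 0 * (T * d) := by rw [mul_assoc (f 0) d T]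

private lemma auxSmul [Algebra ℂ A] : ∀ {n : ℕ} (f : Fin n → A) (i : Fin n) (c : ℂ) (g : A),
    (List.ofFn (Function.update f i (c • g))).prod
      = c • (List.ofFn (Function.update f i g)).prod := by
  intro n
  induction n with
  | zero => exact fun f i => i.elim0
  | succ n ih =>
    intro f i c g
    induction i using Fin.cases with
    | zero =>
      rw [List.ofFn_succ, List.ofFn_succ, List.prod_cons, List.prod_cons,
        Function.update_self, Function.update_self]
      have h : ∀ (x : A), (fun j : Fin n => Function.update f 0 x j.succ)
          = fun j : Fin n => f j.succ := by
        intro x; funext j; rw [Function.update_of_ne (Fin.succ_ne_zero j)]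
      rw [h, h, smul_mul_assoc]
    | succ i' =>
      rw [List.ofFn_succ, List.ofFn_succ, List.prod_cons, List.prod_cons]
      have h0 : ∀ (x : A), Function.update f i'.succ x 0 = f 0 :=
        fun x => Function.update_of_ne (Fin.succ_ne_zero i').symm _ _
      have ht : ∀ (x : A), (fun j : Fin n => Function.update f i'.succ x j.succ)
          = Function.update (fun j : Fin n => f j.succ) i' x := by
        intro x; funext j
        by_cases hj : j = i'
        · subst hj; simp
        · rw [Function.update_of_ne (fun h => hj (Fin.succ_injective _ h)),
            Function.update_of_ne hj]
      rw [h0, h0, ht, ht, ih, mul_smul_comm]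

private lemma auxCpow [Algebra ℂ A] (d x : A) (h : d * x - x * d = 1) :
    ∀ k : ℕ, d * x ^ k - x ^ k * d = (k : ℂ) • x ^ (k - 1) := by
  intro k
  induction k with
  | zero => simp
  | succ k ih =>
    have hx : (k : ℂ) • (x ^ (k - 1) * x) = (k : ℂ) • x ^ k := by
      cases k with
      | zero => simp
      | succ k' => rw [Nat.add_sub_cancel, ← pow_succ]
    have key : d * x ^ (k + 1) = (k : ℂ) • x ^ k + x ^ k + x ^ (k + 1) * d := by
      calc d * x ^ (k + 1) = (d * x ^ k) * x := by rw [pow_succ, mul_assoc]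
        _ = ((k : ℂ) • x ^ (k - 1) + x ^ k * d) * x := by rw [sub_eq_iff_eq_add.mp ih]
        _ = (k : ℂ) • (x ^ (k - 1) * x) + x ^ k * (d * x) := by
            rw [add_mul, smul_mul_assoc, mul_assoc]
        _ = (k : ℂ) • x ^ k + x ^ k * (1 + x * d) := by
            rw [hx, sub_eq_iff_eq_add.mp h]
        _ = (k : ℂ) • x ^ k + x ^ k + x ^ (k + 1) * d := by
            rw [mul_add, mul_one, ← mul_assoc, ← pow_succ, add_assoc]
    rw [key, add_sub_cancel_right, Nat.add_sub_cancel]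
    push_cast
    rw [add_smul, one_smul]

end Aux



/-- Let `M` be a module over the Weyl algebra in `y_1,…,y_r` (given by
commuting operators `Y i` and `DY i` with `[DY i, Y j] = δ_{ij}`) in which every element
is `∂_y`-torsion.  Then with `N = ∩_i ker(∂_{y_i})`, the multiplication map
`ℂ[y_1,…,y_r] ⊗ N → M`, `y^α ⊗ n ↦ Y^α n` (modelled by
`Φ : ((Fin r →₀ ℕ) →₀ N) → M`, `single α n ↦ Y^α n`), is bijective, and it intertwines
the Weyl-algebra actions: `Y i` acts by multiplication on the polynomial factor
(immediate from the formula) and `∂_{y_i}` acts by the Leibniz rule with `∂_{y_i} N = 0`,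
i.e. `DY i (Φ (single α n)) = α_i Φ (single (α−e_i) n)`. -/
theorem stmt16 (r : ℕ) (M : Type*) [AddCommGroup M] [Module ℂ M]
    (Y DY : Fin r → Module.End ℂ M)
    (h1 : ∀ i j, DY i * Y j - Y j * DY i = if i = j then 1 else 0)
    (h2 : ∀ i j, Y i * Y j = Y j * Y i)
    (h3 : ∀ i j, DY i * DY j = DY j * DY i)
    (htor : ∀ m : M, ∃ k : ℕ, ∀ i, ((DY i) ^ k) m = 0)
    (N : Submodule ℂ M) (hN : N = ⨅ i, LinearMap.ker (DY i))
    (Φ : ((Fin r →₀ ℕ) →₀ N) →ₗ[ℂ] M)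
    (hΦ : ∀ (α : Fin r →₀ ℕ) (n : N),
      Φ (Finsupp.single α n) = ((List.ofFn fun i => Y i ^ α i).prod) (n : M)) :
    Function.Bijective Φ ∧
    ∀ (α : Fin r →₀ ℕ) (n : N) (i : Fin r),
      DY i (Φ (Finsupp.single α n)) =
        (α i : ℂ) • Φ (Finsupp.single (α - Finsupp.single i 1) n) := by
  classical
  -- basic commutation facts
  have hcY : ∀ i j, Commute (Y i) (Y j) := fun i j => h2 i j
  have hcD : ∀ i j, Commute (DY i) (DY j) := fun i j => h3 i j
  have hDYY : ∀ i, DY i * Y i - Y i * DY i = 1 := by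
    intro i; have := h1 i i; rwa [if_pos rfl] at this
  have hcDY : ∀ i j, i ≠ j → Commute (DY i) (Y j) := by
    intro i j hij
    have := h1 i j; rw [if_neg hij] at this
    exact sub_eq_zero.mp this
  have hDYN : ∀ (n : N) (i : Fin r), DY i (n : M) = 0 := by
    intro n i
    have hle : N ≤ LinearMap.ker (DY i) := by rw [hN]; exact iInf_le _ i
    exact LinearMap.mem_ker.mp (hle n.2)
  -- the "monomial" operators
  set Lp : (Fin r →₀ ℕ) → Module.End ℂ M :=
    fun α => (List.ofFn fun i => Y i ^ α i).prod with hLp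
  have hL0 : Lp 0 = 1 := by
    apply List.prod_eq_one
    intro x hx
    obtain ⟨j, rfl⟩ := List.mem_ofFn.1 hx
    simp
  have hL1 : ∀ (α : Fin r →₀ ℕ) (i : Fin r),
      Lp (α + Finsupp.single i 1) = Y i * Lp α := by
    intro α i
    have hfun : (fun j => Y j ^ ((α + Finsupp.single i 1 : Fin r →₀ ℕ) j))
        = Function.update (fun j => Y j ^ α j) i (Y i * (fun j => Y j ^ α j) i) := by
      funext j
      by_cases hj : j = i
      · subst hj
        rw [Function.update_self, Finsupp.add_apply, Finsupp.single_eq_same, pow_succ']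
      · rw [Function.update_of_ne hj, Finsupp.add_apply,
          Finsupp.single_eq_of_ne' (Ne.symm hj), add_zero]
    rw [hLp]
    simp only []
    rw [hfun]
    exact auxMul _ i (Y i) (fun j _ => (hcY i j).pow_right _)
  have hL2 : ∀ (α : Fin r →₀ ℕ) (i : Fin r),
      DY i * Lp α = Lp α * DY i + (α i : ℂ) • Lp (α - Finsupp.single i 1) := by
    intro α i
    have hcomm := auxComm (fun j => Y j ^ α j) i (DY i)
      (fun j hj => (hcDY i j (Ne.symm hj)).pow_right _)
    have hupd : Function.update (fun j => Y j ^ α j) i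
        (DY i * (fun j => Y j ^ α j) i - (fun j => Y j ^ α j) i * DY i)
        = Function.update (fun j => Y j ^ α j) i ((α i : ℂ) • Y i ^ (α i - 1)) := by
      rw [auxCpow (DY i) (Y i) (hDYY i) (α i)]
    have hfun : Function.update (fun j => Y j ^ α j) i (Y i ^ (α i - 1))
        = fun j => Y j ^ ((α - Finsupp.single i 1 : Fin r →₀ ℕ) j) := by
      funext j
      by_cases hj : j = i
      · subst hj
        rw [Function.update_self, Finsupp.tsub_apply, Finsupp.single_eq_same]
      · rw [Function.update_of_ne hj, Finsupp.tsub_apply,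
          Finsupp.single_eq_of_ne' (Ne.symm hj), Nat.sub_zero]
    have : DY i * Lp α - Lp α * DY i = (α i : ℂ) • Lp (α - Finsupp.single i 1) := by
      rw [hLp]
      simp only []
      rw [hcomm, hupd, auxSmul, hfun]
    rw [← this]; abel
  -- part 2 : Leibniz rule
  have hpart2 : ∀ (α : Fin r →₀ ℕ) (n : N) (i : Fin r),
      DY i (Φ (Finsupp.single α n)) =
        (α i : ℂ) • Φ (Finsupp.single (α - Finsupp.single i 1) n) := by
    intro α n i
    rw [hΦ, hΦ]
    have := congrArg (fun T : Module.End ℂ M => T (n : M)) (hL2 α i)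
    simp only [Module.End.mul_apply, LinearMap.add_apply, LinearMap.smul_apply] at this
    rw [hDYN n i, map_zero, zero_add] at this
    exact this
  -- Y-action compatibility
  have hpartY : ∀ (α : Fin r →₀ ℕ) (n : N) (i : Fin r),
      Y i (Φ (Finsupp.single α n)) = Φ (Finsupp.single (α + Finsupp.single i 1) n) := by
    intro α n i
    rw [hΦ, hΦ]
    show Y i (Lp α (n : M)) = Lp (α + Finsupp.single i 1) (n : M)
    rw [hL1]
    rfl
  -- formal derivative on the polynomial side
  set Der : Fin r → (((Fin r →₀ ℕ) →₀ N) →ₗ[ℂ] ((Fin r →₀ ℕ) →₀ N)) :=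
    fun i => Finsupp.lsum ℂ
      (fun α => (α i : ℂ) • Finsupp.lsingle (α - Finsupp.single i 1)) with hDer
  have hDer_single : ∀ (i : Fin r) (α : Fin r →₀ ℕ) (n : N),
      Der i (Finsupp.single α n)
        = (α i : ℂ) • Finsupp.single (α - Finsupp.single i 1) n := by
    intro i α n
    rw [hDer]
    simp [Finsupp.lsum_single]
  have hcommD : ∀ (i : Fin r) (f : (Fin r →₀ ℕ) →₀ N),
      DY i (Φ f) = Φ (Der i f) := by
    intro i f
    have : (DY i) ∘ₗ Φ = Φ ∘ₗ Der i := by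
      apply Finsupp.lhom_ext
      intro α n
      simp only [LinearMap.comp_apply]
      rw [hDer_single, map_smul, hpart2]
    exact congrArg (fun T => T f) this
  have hDer_apply : ∀ (i : Fin r) (f : (Fin r →₀ ℕ) →₀ N) (β : Fin r →₀ ℕ),
      (Der i f) β = ((β i + 1 : ℕ) : ℂ) • f (β + Finsupp.single i 1) := by
    intro i f β
    induction f using Finsupp.induction_linear with
    | zero => simp
    | add f g hf hg => simp [Finsupp.add_apply, hf, hg, smul_add]
    | single γ n =>
      rw [hDer_single]
      by_cases hγ : γ = β + Finsupp.single i 1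
      · subst hγ
        rw [add_tsub_cancel_right]
        simp [Finsupp.single_eq_same, Finsupp.add_apply]
      · rw [Finsupp.single_eq_of_ne' hγ]
        by_cases h0 : γ i = 0
        · simp [h0]
        · have hle : Finsupp.single i 1 ≤ γ :=
            Finsupp.single_le_iff.mpr (Nat.one_le_iff_ne_zero.mpr h0)
          have hne : γ - Finsupp.single i 1 ≠ β := by
            intro h
            apply hγ
            rw [← h, tsub_add_cancel_of_le hle]
          rw [Finsupp.smul_apply, Finsupp.single_eq_of_ne' hne]
          simp
  -- degree function
  set deg : (Fin r →₀ ℕ) → ℕ := fun α => α.sum fun _ n => n with hdeg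
  have hdeg_add : ∀ α β, deg (α + β) = deg α + deg β := by
    intro α β
    exact Finsupp.sum_add_index' (fun _ => rfl) (fun _ _ _ => rfl)
  have hdeg_single : ∀ i, deg (Finsupp.single i 1) = 1 := by
    intro i; rw [hdeg]; simp [Finsupp.sum_single_index]
  have hdeg_zero : ∀ α, deg α = 0 → α = 0 := by
    intro α hα
    by_contra hne
    obtain ⟨a, ha⟩ := Finsupp.ne_iff.mp hne
    rw [Finsupp.zero_apply] at ha
    have h1' : 1 ≤ α a := Nat.one_le_iff_ne_zero.mpr ha
    have hmem : a ∈ α.support := Finsupp.mem_support_iff.mpr ha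
    have : α a ≤ deg α := Finset.single_le_sum (fun _ _ => Nat.zero_le _) hmem
    omega
  -- support at zero only
  have hzero_case : ∀ f : (Fin r →₀ ℕ) →₀ N, Φ f = 0 → f.support ⊆ {0} → f = 0 := by
    intro f hf hsupp
    have hfs : f = Finsupp.single 0 (f 0) := Finsupp.support_subset_singleton.mp hsupp
    have : Φ f = (f 0 : M) := by
      rw [hfs, hΦ]
      have : ((List.ofFn fun i => Y i ^ (0 : Fin r →₀ ℕ) i).prod) = Lp 0 := rfl
      rw [this, hL0, Module.End.one_apply]
      simp
    rw [this] at hf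
    rw [hfs]
    have : f 0 = 0 := Subtype.ext hf
    rw [this, Finsupp.single_zero]
  -- injectivity
  have hker : ∀ (d : ℕ) (f : (Fin r →₀ ℕ) →₀ N), Φ f = 0 →
      (∀ α ∈ f.support, deg α ≤ d) → f = 0 := by
    intro d
    induction d with
    | zero =>
      intro f hf hb
      apply hzero_case f hf
      intro α hα
      have := hb α hα
      have : α = 0 := hdeg_zero α (Nat.le_zero.mp this)
      simp [this]
    | succ d ihd =>
      intro f hf hb
      have hTi : ∀ i, Der i f = 0 := by
        intro i
        apply ihd
        · rw [← hcommD, hf, map_zero]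
        · intro β hβ
          have hβ' : (Der i f) β ≠ 0 := Finsupp.mem_support_iff.mp hβ
          rw [hDer_apply] at hβ'
          have hne : f (β + Finsupp.single i 1) ≠ 0 := by
            intro h; apply hβ'; rw [h, smul_zero]
          have hmem : β + Finsupp.single i 1 ∈ f.support := Finsupp.mem_support_iff.mpr hne
          have := hb _ hmem
          rw [hdeg_add, hdeg_single] at this
          omega
      have hvan : ∀ (β : Fin r →₀ ℕ) (i : Fin r), f (β + Finsupp.single i 1) = 0 := by
        intro β i
        have := hDer_apply i f β
        rw [hTi i, Finsupp.zero_apply] at this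
        have hc : ((β i + 1 : ℕ) : ℂ) ≠ 0 := Nat.cast_ne_zero.mpr (Nat.succ_ne_zero _)
        have := (smul_eq_zero.mp this.symm).resolve_left hc
        exact this
      apply hzero_case f hf
      intro α hα
      rw [Finset.mem_singleton]
      by_contra hne
      have hfα : f α ≠ 0 := Finsupp.mem_support_iff.mp hα
      obtain ⟨i, hi⟩ := Finsupp.ne_iff.mp hne
      rw [Finsupp.zero_apply] at hi
      have hle : Finsupp.single i 1 ≤ α :=
        Finsupp.single_le_iff.mpr (Nat.one_le_iff_ne_zero.mpr hi)
      have : f ((α - Finsupp.single i 1) + Finsupp.single i 1) = 0 := hvan _ i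
      rw [tsub_add_cancel_of_le hle] at this
      exact hfα this
  have hinj : Function.Injective Φ := by
    intro a b hab
    have hsub : Φ (a - b) = 0 := by rw [map_sub, hab, sub_self]
    have := hker ((a - b).support.sup deg) (a - b) hsub
      (fun α hα => Finset.le_sup hα)
    exact sub_eq_zero.mp this
  -- surjectivity
  have hrangeY : ∀ (j : Fin r) (k : ℕ) (x : M),
      x ∈ LinearMap.range Φ → ((Y j) ^ k) x ∈ LinearMap.range Φ := by
    intro j k
    induction k with
    | zero => intro x hx; simpa using hx
    | succ k ihk =>
      intro x hx
      rw [pow_succ', Module.End.mul_apply]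
      obtain ⟨f, hf⟩ := ihk x hx
      rw [← hf]
      clear hf
      induction f using Finsupp.induction_linear with
      | zero => exact ⟨0, by simp⟩
      | add f g hf hg =>
        obtain ⟨u, hu⟩ := hf
        obtain ⟨v, hv⟩ := hg
        exact ⟨u + v, by rw [map_add, map_add, map_add, hu, hv]⟩
      | single α n =>
        exact ⟨Finsupp.single (α + Finsupp.single j 1) n, (hpartY α n j).symm⟩
  have hfact : ∀ (j : Fin r) (k : ℕ) (x : M), DY j x = 0 →
      ((DY j) ^ k) (((Y j) ^ k) x) = (k.factorial : ℂ) • x := by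
    intro j k
    induction k with
    | zero => intro x hx; simp
    | succ k ihk =>
      intro x hx
      have hstep : DY j (((Y j) ^ (k+1)) x) = ((k+1 : ℕ) : ℂ) • ((Y j) ^ k) x := by
        have := congrArg (fun T : Module.End ℂ M => T x)
          (sub_eq_iff_eq_add.mp (auxCpow (DY j) (Y j) (hDYY j) (k+1)))
        simp only [Module.End.mul_apply, LinearMap.add_apply, LinearMap.smul_apply] at this
        rw [hx, map_zero, add_zero, Nat.add_sub_cancel] at this
        exact this
      rw [pow_succ (DY j) k, Module.End.mul_apply, hstep, map_smul, ihk x hx,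
        smul_smul, Nat.factorial_succ, Nat.cast_mul]
  -- main surjectivity claim
  have main : ∀ s : Finset (Fin r), ∀ m : M,
      (∀ i, i ∉ s → DY i m = 0) → m ∈ LinearMap.range Φ := by
    intro s
    induction s using Finset.induction_on with
    | empty =>
      intro m hm
      have hmN : m ∈ N := by
        rw [hN, Submodule.mem_iInf]
        exact fun i => LinearMap.mem_ker.mpr (hm i (Finset.notMem_empty i))
      refine ⟨Finsupp.single 0 ⟨m, hmN⟩, ?_⟩
      rw [hΦ]
      have : ((List.ofFn fun i => Y i ^ (0 : Fin r →₀ ℕ) i).prod) = Lp 0 := rfl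
      rw [this, hL0, Module.End.one_apply]
    | @insert j s hjs ihs =>
      intro m hm
      obtain ⟨k₀, hk₀⟩ := htor m
      have inner : ∀ (k : ℕ) (m : M), (∀ i, i ∉ insert j s → DY i m = 0) →
          ((DY j) ^ k) m = 0 → m ∈ LinearMap.range Φ := by
        intro k
        induction k with
        | zero =>
          intro m _ h0
          rw [pow_zero, Module.End.one_apply] at h0
          rw [h0]
          exact Submodule.zero_mem _
        | succ k ihk =>
          intro m hm hk
          set n := ((DY j) ^ k) m with hn
          have hjn : DY j n = 0 := by
            rw [hn, ← Module.End.mul_apply, ← pow_succ']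
            exact hk
          have hin : ∀ i, i ∉ s → DY i n = 0 := by
            intro i his
            by_cases hij : i = j
            · subst hij; exact hjn
            · have hDm : DY i m = 0 := by
                apply hm i
                simp [Finset.mem_insert, hij, his]
              rw [hn, ← Module.End.mul_apply, ((hcD i j).pow_right k).eq,
                Module.End.mul_apply, hDm, map_zero]
          have hnr : n ∈ LinearMap.range Φ := ihs n hin
          set m' := m - (k.factorial : ℂ)⁻¹ • (((Y j) ^ k) n) with hm'def
          have hm'van : ∀ i, i ∉ insert j s → DY i m' = 0 := by
            intro i hi
            have hij : i ≠ j := fun h => hi (by rw [h]; exact Finset.mem_insert_self j s)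
            have hcm : DY i (((Y j) ^ k) n) = ((Y j) ^ k) (DY i n) := by
              rw [← Module.End.mul_apply, ((hcDY i j hij).pow_right k).eq,
                Module.End.mul_apply]
            have hiN : DY i n = 0 := hin i (fun h => hi (Finset.mem_insert_of_mem h))
            rw [hm'def, map_sub, map_smul, hm i hi, hcm, hiN, map_zero, smul_zero, sub_zero]
          have hkm' : ((DY j) ^ k) m' = 0 := by
            rw [hm'def, map_sub, map_smul, hfact j k n hjn, ← hn, smul_smul,
              inv_mul_cancel₀ (Nat.cast_ne_zero.mpr k.factorial_ne_zero), one_smul, sub_self]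
          have hm'r : m' ∈ LinearMap.range Φ := ihk m' hm'van hkm'
          have hmeq : m = m' + (k.factorial : ℂ)⁻¹ • (((Y j) ^ k) n) := by
            rw [hm'def, sub_add_cancel]
          rw [hmeq]
          exact Submodule.add_mem _ hm'r
            (Submodule.smul_mem _ _ (hrangeY j k n hnr))
      exact inner k₀ m hm (hk₀ j)
  have hsurj : Function.Surjective Φ := by
    intro m
    obtain ⟨f, hf⟩ := main Finset.univ m (fun i hi => absurd (Finset.mem_univ i) hi)
    exact ⟨f, hf⟩
  exact ⟨⟨hinj, hsurj⟩, hpart2⟩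
end
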